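/- Under the AMBER 1D iteration M^{t+1} = g_msh(I_{M^t}(f_e(M*))), if the first k vertices of M^k coincide with the first k vertices of the target mesh M*, then the first k+1 vertices of M^{k+1} coincide with the first k+1 vertices of M*. -/
import Mathlib


/-- A 1D mesh on [0,1]: a strictly increasing finite sequence of `N` points
`v 0 = 0 < v 1 < ... < v (N-1) = 1`. -/
structure Mesh1D where
  N : ℕ
  hN : 2 ≤ N
  v : ℕ → ℝ
  mono : ∀ i j, i < j → j < N → v i < v j
  first : v 0 = 0
  last : v (N - 1) = 1

/-- Index of the mesh interval containing `z`: the largest `i < N - 1` with `v i ≤ z`. -/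
noncomputable def Mesh1D.idx (M : Mesh1D) (z : ℝ) : ℕ :=
  sSup {i | i < M.N - 1 ∧ M.v i ≤ z}

/-- The piecewise-constant sizing field of a mesh: `f_e(M)(z) = v (i+1) - v i`
for `v i ≤ z < v (i+1)` (with the last gap used at `z = 1`). -/
noncomputable def Mesh1D.fe (M : Mesh1D) (z : ℝ) : ℝ :=
  M.v (M.idx z + 1) - M.v (M.idx z)

/-- Linear interpolation of a function `g` along the mesh: at `z = (1-d) v i + d v (i+1)`,
the value is `(1-d) g (v i) + d g (v (i+1))`. -/
noncomputable def Mesh1D.interp (M : Mesh1D) (g : ℝ → ℝ) (z : ℝ) : ℝ :=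
  (1 - (z - M.v (M.idx z)) / (M.v (M.idx z + 1) - M.v (M.idx z))) * g (M.v (M.idx z))
    + (z - M.v (M.idx z)) / (M.v (M.idx z + 1) - M.v (M.idx z)) * g (M.v (M.idx z + 1))

/-- The greedy 1D mesh generator: `v 0 = 0`, `v (i+1) = min (v i + f (v i)) 1`.
Once `1` is reached the sequence stays at `1`, which models termination. -/
noncomputable def gen (f : ℝ → ℝ) : ℕ → ℝ
  | 0 => 0
  | n + 1 => min (gen f n + f (gen f n)) 1

lemma Mesh1D.mono_le (M : Mesh1D) {i j : ℕ} (h : i ≤ j) (hj : j < M.N) :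
    M.v i ≤ M.v j := by
  rcases h.lt_or_eq with h | h
  · exact (M.mono _ _ h hj).le
  · simp [h]

lemma Mesh1D.idx_vertex (M : Mesh1D) {i : ℕ} (hi : i < M.N - 1) : M.idx (M.v i) = i := by
  have hiN : i < M.N := lt_of_lt_of_le hi (Nat.sub_le _ _)
  have hset : {j | j < M.N - 1 ∧ M.v j ≤ M.v i} = Set.Iic i := by
    ext j
    simp only [Set.mem_setOf_eq, Set.mem_Iic]
    constructor
    · rintro ⟨hj, hle⟩
      by_contra h
      push_neg at h
      exact absurd hle (not_le.mpr (M.mono i j h (lt_of_lt_of_le hj (Nat.sub_le _ _))))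
    · intro hji
      exact ⟨lt_of_le_of_lt hji hi, M.mono_le hji hiN⟩
  rw [Mesh1D.idx, hset, csSup_Iic]

lemma Mesh1D.fe_vertex (M : Mesh1D) {i : ℕ} (hi : i < M.N - 1) :
    M.fe (M.v i) = M.v (i + 1) - M.v i := by
  rw [Mesh1D.fe, M.idx_vertex hi]

lemma Mesh1D.interp_vertex (M : Mesh1D) (g : ℝ → ℝ) {i : ℕ} (hi : i < M.N - 1) :
    M.interp g (M.v i) = g (M.v i) := by
  rw [Mesh1D.interp, M.idx_vertex hi]
  simp

/-- Induction step of the 1D AMBER convergence proof: if the first `k` vertices of the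
current mesh `A = M^k` coincide with the first `k` vertices of the target `M*`, then the
first `k + 1` points generated by `g_msh(I_A(f_e(M*)))` (the vertices of `M^{k+1}`)
coincide with the first `k + 1` vertices of `M*`. -/
theorem amber_induction_step (Mstar A : Mesh1D) (k : ℕ)
    (hkA : k ≤ A.N) (hkS : k + 1 ≤ Mstar.N)
    (hmatch : ∀ i < k, A.v i = Mstar.v i) :
    ∀ i < k + 1, gen (A.interp Mstar.fe) i = Mstar.v i := by
  intro i
  induction i with
  | zero => intro _; simp [gen, Mstar.first]
  | succ i ih =>
    intro hik
    have hik' : i < k := Nat.lt_of_succ_lt_succ hik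
    have hiv : gen (A.interp Mstar.fe) i = Mstar.v i := ih (Nat.lt_succ_of_lt hik')
    have hiS : i < Mstar.N - 1 :=
      Nat.lt_sub_of_add_lt (lt_of_lt_of_le (Nat.add_lt_add_right hik' 1) hkS)
    have hAv : A.v i = Mstar.v i := hmatch i hik'
    have hiA : i < A.N - 1 := by
      by_contra h
      push_neg at h
      have hiAN : i < A.N := lt_of_lt_of_le hik' hkA
      have : i = A.N - 1 := le_antisymm (Nat.le_sub_one_of_lt hiAN) h
      have h1 : A.v i = 1 := this ▸ A.last
      have h2 : Mstar.v i < 1 := by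
        have := Mstar.mono i (Mstar.N - 1) hiS
          (Nat.sub_lt (lt_of_lt_of_le (by norm_num) Mstar.hN) one_pos)
        rw [Mstar.last] at this
        exact this
      rw [hAv] at h1
      exact h2.ne h1
    have hf : A.interp Mstar.fe (Mstar.v i) = Mstar.v (i + 1) - Mstar.v i := by
      rw [← hAv, A.interp_vertex _ hiA, hAv, Mstar.fe_vertex hiS]
    have hle1 : Mstar.v (i + 1) ≤ 1 := by
      rw [← Mstar.last]
      exact Mstar.mono_le (Nat.le_sub_one_of_lt (lt_of_lt_of_le hik hkS))
        (Nat.sub_lt (lt_of_lt_of_le (by norm_num) Mstar.hN) one_pos)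
    show min (gen (A.interp Mstar.fe) i + A.interp Mstar.fe (gen (A.interp Mstar.fe) i)) 1
        = Mstar.v (i + 1)
    rw [hiv, hf]
    rw [show Mstar.v i + (Mstar.v (i + 1) - Mstar.v i) = Mstar.v (i + 1) by ring]
    exact min_eq_left hle1
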